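/- arXiv:0909.5664 — 7 statements merged into one kernel-verified Lean document; each statement's English description precedes it below -/
import Mathlib

section
/- Let A and B be finite subsets of a group G such that A ∩ B⁻¹ = {1} (where B⁻¹ = {b⁻¹ : b ∈ B}) and both A and B contain 1. Then |AB| ≥ |A| + |B| − 1. -/
open Set Pointwise

variable {V : Type*}

/-- Image of a set under the relation. -/
def img (Γ : V → Set V) (F : Set V) : Set V := ⋃ x ∈ F, Γ x
/-- Reverse relation. -/
def rev (Γ : V → Set V) : V → Set V := fun y => {x | y ∈ Γ x}
/-- Boundary ∂(F) = Γ(F) \ F. -/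
def bd (Γ : V → Set V) (F : Set V) : Set V := img Γ F \ F
/-- ∇(F) = V \ (F ∪ Γ(F)). -/
def nab (Γ : V → Set V) (F : Set V) : Set V := (F ∪ img Γ F)ᶜ
/-- Reflexive relation. -/
def Refl (Γ : V → Set V) : Prop := ∀ x, x ∈ Γ x
/-- Locally finite relation. -/
def LocFin (Γ : V → Set V) : Prop := ∀ x, (Γ x).Finite
/-- Automorphism of the relation. -/
def IsAuto (Γ : V → Set V) (φ : V ≃ V) : Prop := ∀ x, Γ (φ x) = φ '' Γ x
/-- Vertex-transitivity. -/
def VT (Γ : V → Set V) : Prop := ∀ x y : V, ∃ φ : V ≃ V, IsAuto Γ φ ∧ φ x = y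
/-- A finite v-Moser set. -/
def MoserSet (Γ : V → Set V) (v : V) (F : Set V) : Prop :=
  F.Finite ∧ v ∈ F ∧ rev Γ v ∩ F = {v}
/-- μ(v): minimum boundary size over v-Moser sets. -/
noncomputable def mu (Γ : V → Set V) (v : V) : ℕ :=
  sInf {n | ∃ F, MoserSet Γ v F ∧ (bd Γ F).ncard = n}
/-- A v-molecule: Moser set of minimum boundary. -/
def Molecule (Γ : V → Set V) (v : V) (F : Set V) : Prop :=
  MoserSet Γ v F ∧ (bd Γ F).ncard = mu Γ v
/-- The v-kernel: the unique minimal v-molecule. -/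
def IsKernel (Γ : V → Set V) (v : V) (K : Set V) : Prop :=
  Molecule Γ v K ∧ ∀ F, Molecule Γ v F → K ⊆ F
/-- Weak connectivity κ₀. -/
noncomputable def kappa0 (Γ : V → Set V) : ℕ :=
  sInf {n | ∃ X : Set V, X.Finite ∧ X.Nonempty ∧ (bd Γ X).ncard = n}
/-- Weak fragment. -/
def WeakFragment (Γ : V → Set V) (X : Set V) : Prop :=
  X.Finite ∧ X.Nonempty ∧ (bd Γ X).ncard = kappa0 Γ
/-- Weak atom: a weak fragment of minimum cardinality. -/
def WeakAtom (Γ : V → Set V) (X : Set V) : Prop :=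
  WeakFragment Γ X ∧ ∀ Y, WeakFragment Γ Y → X.ncard ≤ Y.ncard

/-!
Kemperman: if some product `a * b` has a unique representation in `s * t`, then
`#s + #t ≤ #(s * t) + 1`. Since `s b ∪ a t ⊆ s t`, this holds unless `s b ∩ a t` contains some
`a g b` with `g ≠ 1`, i.e. `a g ∈ s` and `g b ∈ t`. DeVos's pair of `g`-transforms
`(s ∩ s g, t ∪ g⁻¹ t)` and `(s ∪ s g, t ∩ g⁻¹ t)` then both have product inside `s t` and keep a
uniquely represented product (`a g · g⁻¹ b`, resp. `a b`), and one of them does not decrease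
`#s + #t`. If it is the first one, `#s` drops, because `a g⁻¹ ∉ s` by uniqueness. So induction on
`(2 #(s t) - #s - #t, #s)` applies. For the theorem, `1 · 1` is uniquely represented in `A B`
exactly because `A ∩ B⁻¹ = {1}`.
-/

open Finset MulOpposite
open scoped Pointwise

namespace Finset

variable {α : Type*} [Group α] [DecidableEq α] {s t : Finset α} {a b g : α}

lemma mem_op_smul_finset_iff : a ∈ op g • s ↔ a * g⁻¹ ∈ s := by
  rw [← inv_smul_mem_iff, ← op_inv, op_smul_eq_mul]

lemma card_add_card_le_card_mul_add_card_inter (ha : a ∈ s) (hb : b ∈ t) :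
    #s + #t ≤ #(s * t) + #(op b • s ∩ a • t) := by
  rw [← card_smul_finset (op b) s, ← card_smul_finset a t, ← card_union_add_card_inter]
  gcongr
  exact union_subset (op_smul_finset_subset_mul hb) (smul_finset_subset_mul ha)

lemma card_op_smul_finset_inter_smul_finset_le_one
    (h : ∀ g, a * g ∈ s → g * b ∈ t → g = 1) : #(op b • s ∩ a • t) ≤ 1 := by
  refine card_le_one_iff_subset_singleton.2 ⟨a * b, fun z hz => ?_⟩
  rw [mem_inter, mem_op_smul_finset_iff, ← inv_smul_mem_iff, smul_eq_mul] at hz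
  have := h (a⁻¹ * z * b⁻¹) (by simpa [mul_assoc] using hz.1) (by simpa using hz.2)
  rw [mul_inv_eq_one, inv_mul_eq_iff_eq_mul] at this
  exact mem_singleton.2 this

lemma uniqueMul_one_one_of_inter_inv_subset (h : s ∩ t⁻¹ ⊆ {1}) : UniqueMul s t 1 1 := by
  intro x y hx hy hxy
  have hxy' : x = y⁻¹ := eq_inv_of_mul_eq_one_left (by simpa using hxy)
  have hx1 : x ∈ s ∩ t⁻¹ := mem_inter.2 ⟨hx, by simpa [hxy'] using hy⟩
  obtain rfl := mem_singleton.1 (h hx1)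
  simpa [eq_comm] using hxy'

end Finset

namespace UniqueMul

variable {α : Type*} [Group α] [DecidableEq α] {s t : Finset α} {a b g : α}

lemma mulETransformLeft (h : UniqueMul s t a b) (hgb : g * b ∈ t) (hg : g ≠ 1) :
    UniqueMul (s ∩ op g • s) (t ∪ g⁻¹ • t) (a * g) (g⁻¹ * b) := by
  intro x y hx hy hxy
  rw [Finset.mem_inter, mem_op_smul_finset_iff] at hx
  rw [Finset.mem_union, mem_inv_smul_finset_iff, smul_eq_mul] at hy
  rcases hy with hy | hy
  · obtain rfl := (h hx.1 hy (by simpa [mul_assoc] using hxy)).1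
    exact absurd (h hx.2 hgb (by group)).1 (by simpa using hg)
  · obtain ⟨hx', hy'⟩ := h hx.2 hy (by simpa [mul_assoc] using hxy)
    constructor
    · rw [← hx']; group
    · rw [← hy']; group

lemma mulETransformRight (h : UniqueMul s t a b) (hag : a * g ∈ s) (hg : g ≠ 1) :
    UniqueMul (s ∪ op g • s) (t ∩ g⁻¹ • t) a b := by
  intro x y hx hy hxy
  rw [Finset.mem_union, mem_op_smul_finset_iff] at hx
  rw [Finset.mem_inter, mem_inv_smul_finset_iff, smul_eq_mul] at hy
  rcases hx with hx | hx
  · exact h hx hy.1 hxy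
  · obtain ⟨hx', hy'⟩ := h hx hy.2 (by rw [← hxy]; group)
    obtain rfl : x = a * g := by rw [← hx']; group
    obtain rfl : y = g⁻¹ * b := by rw [← hy']; group
    exact absurd (h hag hy.1 hxy).1 (by simpa using hg)

theorem card_add_card_le_card_mul_add_one {s t : Finset α} {a b : α} (ha : a ∈ s) (hb : b ∈ t)
    (h : UniqueMul s t a b) : #s + #t ≤ #(s * t) + 1 := by
  by_cases hg : ∃ g ≠ 1, a * g ∈ s ∧ g * b ∈ t
  · obtain ⟨g, hg1, hag, hgb⟩ := hg
    have hsum : #(s ∩ op g • s) + #(t ∪ g⁻¹ • t) + (#(s ∪ op g • s) + #(t ∩ g⁻¹ • t)) =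
        #s + #t + (#s + #t) := MulETransform.card g (s, t)
    rcases lt_or_ge (#s + #t) (#(s ∪ op g • s) + #(t ∩ g⁻¹ • t)) with hlt | hle
    · have hbt : b ∈ t ∩ g⁻¹ • t := Finset.mem_inter.2 ⟨hb, by rwa [mem_inv_smul_finset_iff]⟩
      have hsub : #((s ∪ op g • s) * (t ∩ g⁻¹ • t)) ≤ #(s * t) :=
        Finset.card_le_card (mulETransformRight.fst_mul_snd_subset g (s, t))
      have := card_add_card_le_card_mul_add_one (Finset.mem_union_left _ ha) hbt
        (h.mulETransformRight hag hg1)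
      omega
    · have hagL : a * g ∈ s ∩ op g • s := by
        rw [Finset.mem_inter, mem_op_smul_finset_iff, mul_inv_cancel_right]
        exact ⟨hag, ha⟩
      have hbL : g⁻¹ * b ∈ t ∪ g⁻¹ • t := Finset.mem_union_right _ (smul_mem_smul_finset hb)
      have ha_notMem : a ∉ op g • s := fun h' => by
        rw [mem_op_smul_finset_iff] at h'
        exact hg1 (by simpa using (h h' hgb (by group)).1)
      have hlt : #(s ∩ op g • s) < #s :=
        card_lt_card ⟨inter_subset_left, fun hs => ha_notMem (Finset.mem_inter.1 (hs ha)).2⟩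
      have hsub : #((s ∩ op g • s) * (t ∪ g⁻¹ • t)) ≤ #(s * t) :=
        Finset.card_le_card (mulETransformLeft.fst_mul_snd_subset g (s, t))
      have := card_add_card_le_card_mul_add_one hagL hbL (h.mulETransformLeft hgb hg1)
      omega
  · have := card_add_card_le_card_mul_add_card_inter ha hb
    have := card_op_smul_finset_inter_smul_finset_le_one fun g hag hgb =>
      by_contra fun hg1 => hg ⟨g, hg1, hag, hgb⟩
    omega
termination_by (2 * #(s * t) - (#s + #t), #s)
decreasing_by
  · have := Finset.card_le_card_mul_right (s := s ∪ op g • s) ⟨b, hbt⟩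
    have := Finset.card_le_card_mul_left (s := s ∪ op g • s) (t := t ∩ g⁻¹ • t)
      ⟨a, Finset.mem_union_left _ ha⟩
    simp only [Prod.lex_def]
    omega
  · simp only [Prod.lex_def]
    omega

end UniqueMul

/-- Scherk–Kemperman theorem. -/
theorem stmt0 {G : Type*} [Group G] [DecidableEq G] (A B : Finset G)
    (hA : (1 : G) ∈ A) (hB : (1 : G) ∈ B) (h : A ∩ B⁻¹ = {1}) :
    A.card + B.card - 1 ≤ (A * B).card := by
  have := UniqueMul.card_add_card_le_card_mul_add_one hA hB
    (Finset.uniqueMul_one_one_of_inter_inv_subset h.subset)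
  omega
end

section
/- Let A and B be nonempty finite subsets of a group G, and let c ∈ AB. Then |AB| ≥ |A| + |B| − |A ∩ cB⁻¹|, where cB⁻¹ = {cb⁻¹ : b ∈ B}. -/
open Set Pointwise

variable {V : Type*}

/-!
Normalise so that `1 ∈ s ∩ t` and `1 = 1 * 1` is the only representation of `1` in `s * t`
(Scherk's setting). If `s ∩ t = {1}`, then `s ∪ t ⊆ s * t` already gives the bound. Otherwise
pick `x ≠ 1` in `s ∩ t` and replace `(s, t)` by `(s ∪ s x, t ∩ x⁻¹ t)` or `(s ∩ s x⁻¹, t ∪ x t)`.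
Both keep the normalisation and do not enlarge the product set, and their cardinality sums add up
to `2 (|s| + |t|)`. So either the first does not decrease `|s| + |t|` (and strictly shrinks `t`,
as `x⁻¹ ∉ t`), or the second increases it; induct. Kemperman's bound follows by applying this to
`s = {a} ∪ (A \ c B⁻¹)` and `t = B`, where `c = a b`.
-/

open Finset MulOpposite

section Scherk

variable {α : Type*} [Group α] {s t : Finset α} {x : α}

lemma uniqueMul_one_one_iff : UniqueMul s t 1 1 ↔ ∀ a ∈ s, a⁻¹ ∈ t → a = 1 := by
  refine ⟨fun h a ha ha' ↦ (h ha ha' (by simp)).1, fun h a b ha hb hab ↦ ?_⟩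
  obtain rfl := eq_inv_of_mul_eq_one_right (hab.trans (one_mul 1))
  obtain rfl := h a ha hb
  simp

variable [DecidableEq α]

lemma card_mulETransformRight_add_card_mulETransformLeft_inv (e : α) (p : Finset α × Finset α) :
    #(mulETransformRight e p).1 + #(mulETransformRight e p).2 +
        (#(mulETransformLeft e⁻¹ p).1 + #(mulETransformLeft e⁻¹ p).2) =
      2 * (#p.1 + #p.2) := by
  have h₁ : #(p.1 ∩ op e⁻¹ • p.1) = #(p.1 ∩ op e • p.1) := by
    rw [← card_smul_finset (op e), smul_finset_inter, op_inv, smul_inv_smul, Finset.inter_comm]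
  have h₂ : #(p.2 ∩ e⁻¹ • p.2) = #(p.2 ∩ e • p.2) := by
    rw [← card_smul_finset e, smul_finset_inter, smul_inv_smul, Finset.inter_comm]
  have := card_union_add_card_inter p.1 (op e • p.1)
  have := card_union_add_card_inter p.2 (e • p.2)
  simp only [mulETransformRight_fst, mulETransformRight_snd, mulETransformLeft_fst,
    mulETransformLeft_snd, inv_inv, h₁, h₂, card_smul_finset] at *
  omega

lemma uniqueMul_mulETransformRight (hx : x ∈ s) (h : UniqueMul s t 1 1) :
    UniqueMul (mulETransformRight x (s, t)).1 (mulETransformRight x (s, t)).2 1 1 := by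
  rw [uniqueMul_one_one_iff] at h ⊢
  simp only [mulETransformRight_fst, mulETransformRight_snd, Finset.mem_union, Finset.mem_inter,
    mem_smul_finset, op_smul_eq_mul, smul_eq_mul]
  rintro _ (hy | ⟨a, ha, rfl⟩) ⟨hyt, b, hb, hab⟩
  · exact h _ hy hyt
  · obtain rfl : b = a⁻¹ := by simpa using hab
    obtain rfl : a = 1 := h a ha hb
    simpa using h x hx (by simpa using hyt)

lemma uniqueMul_mulETransformLeft_inv (hx : x ∈ t) (h : UniqueMul s t 1 1) :
    UniqueMul (mulETransformLeft x⁻¹ (s, t)).1 (mulETransformLeft x⁻¹ (s, t)).2 1 1 := by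
  rw [uniqueMul_one_one_iff] at h ⊢
  simp only [mulETransformLeft_fst, mulETransformLeft_snd, inv_inv, Finset.mem_union,
    Finset.mem_inter, mem_smul_finset, op_smul_eq_mul, smul_eq_mul]
  rintro y ⟨hy, a, ha, rfl⟩ (hyt | ⟨b, hb, hab⟩)
  · exact h _ hy hyt
  · obtain rfl : b = a⁻¹ := by simpa using hab
    obtain rfl : a = 1 := h a ha hb
    simpa using h x⁻¹ (by simpa using hy) (by simpa using hx)

lemma card_inter_inv_smul_lt_card (ht : 1 ∈ t) (hx : x⁻¹ ∉ t) : #(t ∩ x⁻¹ • t) < #t := by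
  refine card_lt_card ⟨inter_subset_left, fun hsub ↦ hx ?_⟩
  have htx : x⁻¹ • t = t :=
    (eq_of_subset_of_card_le (hsub.trans inter_subset_right) (card_smul_finset _ _).le).symm
  rw [← htx, mem_inv_smul_finset_iff, smul_eq_mul, mul_inv_cancel]
  exact ht

lemma card_add_card_le_card_mul_add_one_of_inter_subset (hs : 1 ∈ s) (ht : 1 ∈ t)
    (hst : s ∩ t ⊆ {1}) : #s + #t ≤ #(s * t) + 1 :=
  calc #s + #t = #(s ∪ t) + #(s ∩ t) := (card_union_add_card_inter s t).symm
    _ ≤ #(s * t) + 1 :=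
      add_le_add (card_le_card (union_subset (subset_mul_left s ht) (subset_mul_right t hs)))
        ((Finset.card_le_card hst).trans_eq (card_singleton 1))

lemma exists_uniqueMul_card_mul_le_of_not_inter_subset (hs : 1 ∈ s) (ht : 1 ∈ t)
    (h : UniqueMul s t 1 1) (hst : ¬s ∩ t ⊆ {1}) :
    ∃ s' t' : Finset α, 1 ∈ s' ∧ 1 ∈ t' ∧ UniqueMul s' t' 1 1 ∧ #(s' * t') ≤ #(s * t) ∧
      (#s + #t < #s' + #t' ∨ #s + #t ≤ #s' + #t' ∧ #t' < #t) := by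
  obtain ⟨x, hx, hx1⟩ := Finset.not_subset.1 hst
  obtain ⟨hxs, hxt⟩ := Finset.mem_inter.1 hx
  have hcard := card_mulETransformRight_add_card_mulETransformLeft_inv x (s, t)
  dsimp only at hcard
  rcases le_or_gt (#s + #t) (#(mulETransformRight x (s, t)).1 + #(mulETransformRight x (s, t)).2)
    with hsum | hsum
  · refine ⟨(mulETransformRight x (s, t)).1, (mulETransformRight x (s, t)).2,
      Finset.mem_union_left _ hs,
      Finset.mem_inter.2 ⟨ht, by simpa [mem_inv_smul_finset_iff] using hxt⟩,
      uniqueMul_mulETransformRight hxs h,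
      Finset.card_le_card (mulETransformRight.fst_mul_snd_subset x (s, t)),
      Or.inr ⟨hsum, card_inter_inv_smul_lt_card ht fun hx' ↦ ?_⟩⟩
    exact hx1 (Finset.mem_singleton.2 (uniqueMul_one_one_iff.1 h x hxs hx'))
  · refine ⟨(mulETransformLeft x⁻¹ (s, t)).1, (mulETransformLeft x⁻¹ (s, t)).2,
      Finset.mem_inter.2 ⟨hs, by simpa [mem_inv_smul_finset_iff] using hxs⟩,
      Finset.mem_union_left _ ht, uniqueMul_mulETransformLeft_inv hxt h,
      Finset.card_le_card (mulETransformLeft.fst_mul_snd_subset x⁻¹ (s, t)), Or.inl ?_⟩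
    omega

theorem scherk_of_one_mem (hs : 1 ∈ s) (ht : 1 ∈ t) (h : UniqueMul s t 1 1) :
    #s + #t ≤ #(s * t) + 1 := by
  induction hm : toLex (2 * #(s * t) - (#s + #t), #t) using WellFoundedLT.induction
    generalizing s t with
  | ind m ih =>
  by_cases hst : s ∩ t ⊆ {1}
  · exact card_add_card_le_card_mul_add_one_of_inter_subset hs ht hst
  obtain ⟨s', t', hs', ht', h', hmul, hsum⟩ :=
    exists_uniqueMul_card_mul_le_of_not_inter_subset hs ht h hst
  have := Finset.card_le_card (subset_mul_left s' ht')
  have := Finset.card_le_card (subset_mul_right t' hs')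
  have hlt : toLex (2 * #(s' * t') - (#s' + #t'), #t') < m := by
    rw [← hm, Prod.Lex.toLex_lt_toLex]
    omega
  have := ih _ hlt hs' ht' h' rfl
  omega

lemma UniqueMul.smul_op_smul {a b : α} (h : UniqueMul s t a b) (c d : α) :
    UniqueMul (c • s) (op d • t) (c * a) (b * d) := by
  intro x y hx hy hxy
  obtain ⟨x, hxs, rfl⟩ := Finset.mem_smul_finset.1 hx
  obtain ⟨y, hyt, rfl⟩ := Finset.mem_smul_finset.1 hy
  simp only [smul_eq_mul, op_smul_eq_mul] at hxy ⊢
  have hxy' : x * y * d = a * b * d := by simpa only [mul_assoc, mul_right_inj] using hxy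
  obtain ⟨rfl, rfl⟩ := h hxs hyt (mul_right_cancel hxy')
  exact ⟨rfl, rfl⟩

theorem scherk {a b : α} (ha : a ∈ s) (hb : b ∈ t) (h : UniqueMul s t a b) :
    #s + #t ≤ #(s * t) + 1 := by
  have hs : (1 : α) ∈ a⁻¹ • s := by simpa [mem_inv_smul_finset_iff] using ha
  have ht : (1 : α) ∈ op b⁻¹ • t := by
    rw [op_inv, mem_inv_smul_finset_iff]
    simpa using hb
  have hst : (a⁻¹ • s) * (op b⁻¹ • t) = a⁻¹ • op b⁻¹ • (s * t) := by
    rw [smul_mul_assoc, mul_smul_comm]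
  have := scherk_of_one_mem hs ht (by simpa using h.smul_op_smul a⁻¹ b⁻¹)
  rwa [hst, card_smul_finset, card_smul_finset, card_smul_finset, card_smul_finset] at this

lemma uniqueMul_insert_sdiff_smul_inv (a b : α) :
    UniqueMul (insert a (s \ (a * b) • t⁻¹)) t a b := by
  intro x y hx hy hxy
  obtain rfl | hx := Finset.mem_insert.1 hx
  · exact ⟨rfl, mul_left_cancel hxy⟩
  refine absurd (Finset.mem_smul_finset.2 ⟨y⁻¹, Finset.inv_mem_inv hy, ?_⟩)
    (Finset.mem_sdiff.1 hx).2
  simp [← hxy]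

end Scherk

theorem stmt1_general {G : Type*} [Group G] [DecidableEq G] (A B : Finset G)
    (c : G) (hc : c ∈ A * B) :
    A.card + B.card - (A ∩ c • B⁻¹).card ≤ (A * B).card := by
  obtain ⟨a, ha, b, hb, rfl⟩ := Finset.mem_mul.1 hc
  have haC : a ∈ (a * b) • B⁻¹ :=
    Finset.mem_smul_finset.2 ⟨b⁻¹, Finset.inv_mem_inv hb, by simp⟩
  have h₁ := scherk (Finset.mem_insert_self a _) hb (uniqueMul_insert_sdiff_smul_inv (s := A) a b)
  have h₂ : #(insert a (A \ (a * b) • B⁻¹) * B) ≤ #(A * B) :=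
    Finset.card_le_card (Finset.mul_subset_mul_right (Finset.insert_subset ha sdiff_subset))
  rw [Finset.card_insert_of_notMem fun h ↦ (Finset.mem_sdiff.1 h).2 haC, card_sdiff,
    Finset.inter_comm] at h₁
  have h₃ : #(A ∩ (a * b) • B⁻¹) ≤ #A := Finset.card_le_card inter_subset_left
  omega

/-- Kemperman's theorem. -/
theorem stmt1 {G : Type*} [Group G] [DecidableEq G] (A B : Finset G)
    (hA : A.Nonempty) (hB : B.Nonempty) (c : G) (hc : c ∈ A * B) :
    A.card + B.card - (A ∩ c • B⁻¹).card ≤ (A * B).card :=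
  stmt1_general A B c hc
end

section
/- Let Γ be a reflexive relation on a set V such that Γ(x) is finite for every x ∈ V, and let X, Y be finite subsets of V. Then |∂(X ∪ Y)| + |∂(X ∩ Y)| ≤ |∂(X)| + |∂(Y)|, where ∂(F) = Γ(F) \ F and Γ(F) is the image of F under the relation. -/
open Set Pointwise

variable {V : Type*}

theorem img_union (Γ : V → Set V) (X Y : Set V) : img Γ (X ∪ Y) = img Γ X ∪ img Γ Y :=
  biUnion_union X Y Γ

theorem img_inter_subset (Γ : V → Set V) (X Y : Set V) :
    img Γ (X ∩ Y) ⊆ img Γ X ∩ img Γ Y :=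
  subset_inter (biUnion_subset_biUnion_left inter_subset_left)
    (biUnion_subset_biUnion_left inter_subset_right)

theorem LocFin.bd_finite {Γ : V → Set V} (hΓ : LocFin Γ) {F : Set V} (hF : F.Finite) :
    (bd Γ F).Finite :=
  (hF.biUnion fun x _ => hΓ x).sdiff

theorem bd_union_union_bd_inter_subset (Γ : V → Set V) (X Y : Set V) :
    bd Γ (X ∪ Y) ∪ bd Γ (X ∩ Y) ⊆ bd Γ X ∪ bd Γ Y := by
  rintro z (⟨hzU, hz⟩ | ⟨hzI, hz⟩)
  · rw [img_union] at hzU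
    simp only [bd, mem_union, mem_sdiff] at hzU hz ⊢
    tauto
  · have := img_inter_subset Γ X Y hzI
    simp only [bd, mem_union, mem_inter_iff, mem_sdiff] at this hz ⊢
    tauto

theorem bd_union_inter_bd_inter_subset (Γ : V → Set V) (X Y : Set V) :
    bd Γ (X ∪ Y) ∩ bd Γ (X ∩ Y) ⊆ bd Γ X ∩ bd Γ Y := by
  rintro z ⟨⟨-, hzU⟩, hzI, -⟩
  obtain ⟨hzX, hzY⟩ := img_inter_subset Γ X Y hzI
  rw [mem_union, not_or] at hzU
  exact ⟨⟨hzX, hzU.1⟩, hzY, hzU.2⟩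

theorem Set.ncard_add_ncard_le_of_union_subset_of_inter_subset {α : Type*} {A B C D : Set α}
    (hC : C.Finite) (hD : D.Finite) (hU : A ∪ B ⊆ C ∪ D) (hI : A ∩ B ⊆ C ∩ D) :
    A.ncard + B.ncard ≤ C.ncard + D.ncard := by
  have hA : A.Finite := (hC.union hD).subset (subset_union_left.trans hU)
  have hB : B.Finite := (hC.union hD).subset (subset_union_right.trans hU)
  rw [← ncard_union_add_ncard_inter A B hA hB, ← ncard_union_add_ncard_inter C D hC hD]
  exact add_le_add (ncard_le_ncard hU (hC.union hD)) (ncard_le_ncard hI (hC.subset inter_subset_left))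

theorem stmt2_general {V : Type*} (Γ : V → Set V) (hlf : LocFin Γ)
    (X Y : Set V) (hX : X.Finite) (hY : Y.Finite) :
    (bd Γ (X ∪ Y)).ncard + (bd Γ (X ∩ Y)).ncard ≤ (bd Γ X).ncard + (bd Γ Y).ncard :=
  ncard_add_ncard_le_of_union_subset_of_inter_subset (hlf.bd_finite hX) (hlf.bd_finite hY)
    (bd_union_union_bd_inter_subset Γ X Y) (bd_union_inter_bd_inter_subset Γ X Y)

/-- Submodularity of the boundary. -/
theorem stmt2 {V : Type*} (Γ : V → Set V) (hr : Refl Γ) (hlf : LocFin Γ)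
    (X Y : Set V) (hX : X.Finite) (hY : Y.Finite) :
    (bd Γ (X ∪ Y)).ncard + (bd Γ (X ∩ Y)).ncard ≤ (bd Γ X).ncard + (bd Γ Y).ncard :=
  stmt2_general Γ hlf X Y hX hY
end

section
/- Let Γ be a reflexive locally-finite relation on V. For distinct vertices v, w ∈ V, the v-kernel K_v and the w-kernel K_w are distinct: K_v ≠ K_w. -/
/-! If `K` were the kernel of both `v` and `w`, then `w` would have no in-neighbour in `K` besides
itself, so deleting `w` from `K` cannot enlarge the boundary: `K \ {w}` would be a `v`-molecule
strictly inside the `v`-kernel. -/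

open Set Pointwise

variable {V : Type*}

variable {Γ : V → Set V}

theorem img_mono {F G : Set V} (h : F ⊆ G) : img Γ F ⊆ img Γ G :=
  biUnion_subset_biUnion_left h

theorem LocFin.finite_bd (hlf : LocFin Γ) {F : Set V} (hF : F.Finite) : (bd Γ F).Finite :=
  (hF.biUnion fun x _ => hlf x).sdiff

theorem bd_sdiff_singleton_subset {F : Set V} {w : V} (hw : rev Γ w ∩ F ⊆ {w}) :
    bd Γ (F \ {w}) ⊆ bd Γ F := by
  rintro y ⟨hyimg, hyF⟩
  refine ⟨img_mono sdiff_subset hyimg, fun hy => ?_⟩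
  obtain rfl : y = w := by_contra fun hyw => hyF ⟨hy, hyw⟩
  simp only [img, mem_iUnion] at hyimg
  obtain ⟨x, ⟨hxF, hxy⟩, hyx⟩ := hyimg
  exact hxy (hw ⟨hyx, hxF⟩)

theorem MoserSet.sdiff_singleton {v w : V} {F : Set V} (hF : MoserSet Γ v F) (hwv : w ≠ v) :
    MoserSet Γ v (F \ {w}) := by
  obtain ⟨hfin, hv, hrev⟩ := hF
  refine ⟨hfin.sdiff, ⟨hv, hwv.symm⟩, ?_⟩
  rw [← inter_sdiff_assoc, hrev]
  exact sdiff_singleton_eq_self hwv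

theorem mu_le_ncard_bd {v : V} {F : Set V} (hF : MoserSet Γ v F) : mu Γ v ≤ (bd Γ F).ncard :=
  Nat.sInf_le ⟨F, hF, rfl⟩

theorem Molecule.of_bd_subset (hlf : LocFin Γ) {v : V} {K F : Set V} (hK : Molecule Γ v K)
    (hF : MoserSet Γ v F) (hbd : bd Γ F ⊆ bd Γ K) : Molecule Γ v F :=
  ⟨hF, le_antisymm (hK.2 ▸ ncard_le_ncard hbd (hlf.finite_bd hK.1.1)) (mu_le_ncard_bd hF)⟩

theorem stmt5_general {V : Type*} (Γ : V → Set V) (hlf : LocFin Γ)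
    (v w : V) (hvw : v ≠ w) (Kv Kw : Set V)
    (hKv : IsKernel Γ v Kv) (hKw : IsKernel Γ w Kw) : Kv ≠ Kw := by
  rintro rfl
  obtain ⟨⟨⟨-, hw, hrev⟩, -⟩, -⟩ := hKw
  have hmol : Molecule Γ v (Kv \ {w}) :=
    hKv.1.of_bd_subset hlf (hKv.1.1.sdiff_singleton hvw.symm)
      (bd_sdiff_singleton_subset hrev.subset)
  exact (hKv.2 _ hmol hw).2 rfl

/-- Kernels of distinct vertices are distinct. -/
theorem stmt5 {V : Type*} (Γ : V → Set V) (hr : Refl Γ) (hlf : LocFin Γ)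
    (v w : V) (hvw : v ≠ w) (Kv Kw : Set V)
    (hKv : IsKernel Γ v Kv) (hKw : IsKernel Γ w Kw) : Kv ≠ Kw :=
  stmt5_general Γ hlf v w hvw Kv Kw hKv hKw
end

section
/- Let Γ be a locally-finite reflexive vertex-transitive relation on an infinite set V with some finite nonempty set having finite boundary, and let A be a weak atom of Γ. Then the induced subgraph Γ[A] is vertex-transitive, and every vertex of V belongs to some weak atom. -/
/-!
Boundary size is submodular: `|∂(X ∩ Y)| + |∂(X ∪ Y)| ≤ |∂X| + |∂Y|`. For two weak atoms `A`, `B`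
that meet, `A ∩ B` and `A ∪ B` are nonempty finite sets, so both boundaries are at least `κ₀`;
submodularity then makes `A ∩ B` a weak fragment, and minimality of `|A|`, `|B|` forces
`A = A ∩ B = B`. Automorphisms map weak atoms to weak atoms, so an automorphism sending a
point of `A` into `A` fixes `A` setwise and restricts to an automorphism of `Γ[A]`;
vertex-transitivity of `Γ` gives both claims.
-/

open Set Pointwise

variable {V : Type*}

/-- Induced subrelation on a subset. -/
def restrict (Γ : V → Set V) (A : Set V) : A → Set A := fun x => {y | (y : V) ∈ Γ x}

variable {Γ : V → Set V}

lemma LocFin.img_finite (hlf : LocFin Γ) {X : Set V} (hX : X.Finite) : (img Γ X).Finite :=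
  hX.biUnion fun x _ => hlf x

lemma LocFin.bd_finite_s12 (hlf : LocFin Γ) {X : Set V} (hX : X.Finite) : (bd Γ X).Finite :=
  (hlf.img_finite hX).sdiff

lemma kappa0_le_ncard_bd {X : Set V} (hX : X.Finite) (hXne : X.Nonempty) :
    kappa0 Γ ≤ (bd Γ X).ncard :=
  Nat.sInf_le ⟨X, hX, hXne, rfl⟩

lemma mem_img_iff {X : Set V} {z : V} : z ∈ img Γ X ↔ ∃ x ∈ X, z ∈ Γ x := by
  simp only [img, mem_iUnion₂, exists_prop]

lemma bd_inter_union_bd_union_subset (X Y : Set V) :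
    bd Γ (X ∩ Y) ∪ bd Γ (X ∪ Y) ⊆ bd Γ X ∪ bd Γ Y := by
  rintro z (⟨hz, hzXY⟩ | ⟨hz, hzXY⟩)
  · obtain ⟨x, ⟨hxX, hxY⟩, hzx⟩ := mem_img_iff.1 hz
    by_cases hzX : z ∈ X
    · exact Or.inr ⟨mem_img_iff.2 ⟨x, hxY, hzx⟩, fun hzY => hzXY ⟨hzX, hzY⟩⟩
    · exact Or.inl ⟨mem_img_iff.2 ⟨x, hxX, hzx⟩, hzX⟩
  · obtain ⟨x, hxX | hxY, hzx⟩ := mem_img_iff.1 hz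
    · exact Or.inl ⟨mem_img_iff.2 ⟨x, hxX, hzx⟩, fun h => hzXY (Or.inl h)⟩
    · exact Or.inr ⟨mem_img_iff.2 ⟨x, hxY, hzx⟩, fun h => hzXY (Or.inr h)⟩

lemma bd_inter_inter_bd_union_subset (X Y : Set V) :
    bd Γ (X ∩ Y) ∩ bd Γ (X ∪ Y) ⊆ bd Γ X ∩ bd Γ Y := by
  rintro z ⟨⟨hz, -⟩, -, hzXY⟩
  obtain ⟨x, ⟨hxX, hxY⟩, hzx⟩ := mem_img_iff.1 hz
  exact ⟨⟨mem_img_iff.2 ⟨x, hxX, hzx⟩, fun h => hzXY (Or.inl h)⟩,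
    ⟨mem_img_iff.2 ⟨x, hxY, hzx⟩, fun h => hzXY (Or.inr h)⟩⟩

lemma ncard_bd_inter_add_ncard_bd_union_le {X Y : Set V} (hX : (bd Γ X).Finite)
    (hY : (bd Γ Y).Finite) :
    (bd Γ (X ∩ Y)).ncard + (bd Γ (X ∪ Y)).ncard ≤ (bd Γ X).ncard + (bd Γ Y).ncard := by
  have hunion := bd_inter_union_bd_union_subset (Γ := Γ) X Y
  have hinter := bd_inter_inter_bd_union_subset (Γ := Γ) X Y
  have hXY : (bd Γ X ∪ bd Γ Y).Finite := hX.union hY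
  rw [← ncard_union_add_ncard_inter _ _ (hXY.subset (subset_union_left.trans hunion))
      (hXY.subset (subset_union_right.trans hunion)), ← ncard_union_add_ncard_inter _ _ hX hY]
  exact Nat.add_le_add (ncard_le_ncard hunion hXY) (ncard_le_ncard hinter (hX.inter_of_left _))

lemma IsAuto.img_image {φ : V ≃ V} (hφ : IsAuto Γ φ) (X : Set V) :
    img Γ (φ '' X) = φ '' img Γ X := by
  simp only [img, biUnion_image, image_iUnion₂]
  exact iUnion₂_congr fun x _ => hφ x

lemma IsAuto.bd_image {φ : V ≃ V} (hφ : IsAuto Γ φ) (X : Set V) :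
    bd Γ (φ '' X) = φ '' bd Γ X := by
  rw [bd, bd, hφ.img_image, image_sdiff φ.injective]

lemma WeakFragment.image {φ : V ≃ V} (hφ : IsAuto Γ φ) {X : Set V} (hX : WeakFragment Γ X) :
    WeakFragment Γ (φ '' X) :=
  ⟨hX.1.image φ, hX.2.1.image φ, by
    rw [hφ.bd_image, ncard_image_of_injective _ φ.injective, hX.2.2]⟩

lemma WeakAtom.image {φ : V ≃ V} (hφ : IsAuto Γ φ) {X : Set V} (hX : WeakAtom Γ X) :
    WeakAtom Γ (φ '' X) :=
  ⟨hX.1.image hφ, fun Y hY => (ncard_image_of_injective _ φ.injective).trans_le (hX.2 Y hY)⟩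

lemma WeakAtom.eq_of_inter_nonempty (hlf : LocFin Γ) {A B : Set V} (hA : WeakAtom Γ A)
    (hB : WeakAtom Γ B) (hAB : (A ∩ B).Nonempty) : A = B := by
  obtain ⟨⟨hAf, hAne, hAbd⟩, hAmin⟩ := hA
  obtain ⟨⟨hBf, -, hBbd⟩, hBmin⟩ := hB
  have hunion : kappa0 Γ ≤ (bd Γ (A ∪ B)).ncard :=
    kappa0_le_ncard_bd (hAf.union hBf) (hAne.mono subset_union_left)
  have hsubmod := ncard_bd_inter_add_ncard_bd_union_le (hlf.bd_finite_s12 hAf) (hlf.bd_finite_s12 hBf)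
  have hinter : WeakFragment Γ (A ∩ B) := ⟨hAf.inter_of_left B, hAB,
    le_antisymm (by omega) (kappa0_le_ncard_bd (hAf.inter_of_left B) hAB)⟩
  calc A = A ∩ B := (eq_of_subset_of_ncard_le inter_subset_left (hAmin _ hinter) hAf).symm
    _ = B := eq_of_subset_of_ncard_le inter_subset_right (hBmin _ hinter) hBf

lemma WeakAtom.image_eq_self (hlf : LocFin Γ) {φ : V ≃ V} (hφ : IsAuto Γ φ) {A : Set V}
    (hA : WeakAtom Γ A) {x : V} (hx : x ∈ A) (hφx : φ x ∈ A) : φ '' A = A :=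
  (hA.image hφ).eq_of_inter_nonempty hlf hA ⟨φ x, mem_image_of_mem φ hx, hφx⟩

lemma IsAuto.subtypeEquiv {φ : V ≃ V} (hφ : IsAuto Γ φ) {A : Set V}
    (hA : ∀ a, a ∈ A ↔ φ a ∈ A) :
    IsAuto (_root_.restrict Γ A) (φ.subtypeEquiv hA) := by
  intro z
  ext w
  rw [Equiv.image_eq_preimage_symm]
  simp only [_root_.restrict, mem_preimage, mem_ofPred_eq, hφ z, Equiv.image_eq_preimage_symm,
    Equiv.subtypeEquiv_symm, Equiv.subtypeEquiv_apply]

theorem stmt12_general {V : Type*} (Γ : V → Set V) (hlf : LocFin Γ)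
    (hvt : VT Γ)
    (A : Set V) (hA : WeakAtom Γ A) :
    VT (restrict Γ A) ∧ ∀ v : V, ∃ B : Set V, WeakAtom Γ B ∧ v ∈ B := by
  refine ⟨fun x y => ?_, fun v => ?_⟩
  · obtain ⟨φ, hφ, hφx⟩ := hvt x y
    have hφA : φ '' A = A := hA.image_eq_self hlf hφ x.2 (hφx ▸ y.2)
    have hmem : ∀ a, a ∈ A ↔ φ a ∈ A := fun a => by
      rw [← φ.injective.mem_set_image, hφA]
    exact ⟨φ.subtypeEquiv hmem, hφ.subtypeEquiv hmem, Subtype.ext hφx⟩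
  · obtain ⟨a, ha⟩ := hA.1.2.1
    obtain ⟨φ, hφ, hφa⟩ := hvt a v
    exact ⟨φ '' A, hA.image hφ, a, ha, hφa⟩

/-- The induced graph on a weak atom is vertex-transitive, and every vertex
belongs to some weak atom. -/
theorem stmt12 {V : Type*} [Infinite V] (Γ : V → Set V) (hlf : LocFin Γ) (hr : Refl Γ)
    (hvt : VT Γ) (hfin : ∃ X : Set V, X.Finite ∧ X.Nonempty ∧ (bd Γ X).Finite)
    (A : Set V) (hA : WeakAtom Γ A) :
    VT (restrict Γ A) ∧ ∀ v : V, ∃ B : Set V, WeakAtom Γ B ∧ v ∈ B :=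
  stmt12_general Γ hlf hvt A hA
end

section
/- Let G be a group, B ⊆ G a finite subset with 1 ∈ B, and Γ = Cay(G, B) the Cayley graph with x → y iff x⁻¹y ∈ B. Then the kernel graph Ω of Γ is itself a Cayley graph: Ω = Cay(G, B ∩ K₁), where K₁ is the 1-kernel of Γ. -/
open Set Pointwise

variable {V : Type*}

/-! Left multiplication by `x` is an automorphism of the Cayley graph, and automorphisms carry
Moser sets, boundaries, `μ`, molecules and hence kernels to each other. Uniqueness of the kernel
then gives `K x = x • K 1`, so `Γ x ∩ K x = x • (B ∩ K 1)`. -/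

namespace IsAuto

variable {Γ : V → Set V} {φ : V ≃ V}

lemma symm (h : IsAuto Γ φ) : IsAuto Γ φ.symm := by
  intro x
  rw [← φ.symm_image_image (Γ (φ.symm x)), ← h, φ.apply_symm_apply]

lemma img_image_s15 (h : IsAuto Γ φ) (F : Set V) : img Γ (φ '' F) = φ '' img Γ F := by
  simp only [img, biUnion_image, h _, image_iUnion₂]

lemma rev_apply (h : IsAuto Γ φ) (v : V) : rev Γ (φ v) = φ '' rev Γ v := by
  ext x
  have hx : Γ x = φ '' Γ (φ.symm x) := by rw [← h, φ.apply_symm_apply]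
  simp only [rev, mem_image_equiv, mem_ofPred_eq, hx, φ.symm_apply_apply]

lemma bd_image_s15 (h : IsAuto Γ φ) (F : Set V) : bd Γ (φ '' F) = φ '' bd Γ F := by
  rw [bd, bd, h.img_image_s15, image_sdiff φ.injective]

lemma ncard_bd_image (h : IsAuto Γ φ) (F : Set V) :
    (bd Γ (φ '' F)).ncard = (bd Γ F).ncard := by
  rw [h.bd_image_s15, ncard_image_of_injective _ φ.injective]

lemma moserSet_image (h : IsAuto Γ φ) {v : V} {F : Set V} (hF : MoserSet Γ v F) :
    MoserSet Γ (φ v) (φ '' F) := by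
  obtain ⟨hfin, hv, hrev⟩ := hF
  refine ⟨hfin.image φ, mem_image_of_mem φ hv, ?_⟩
  rw [h.rev_apply, ← image_inter φ.injective, hrev, image_singleton]

lemma moserSet_symm_image (h : IsAuto Γ φ) {v : V} {F : Set V} (hF : MoserSet Γ (φ v) F) :
    MoserSet Γ v (φ.symm '' F) := by
  simpa only [φ.symm_apply_apply] using h.symm.moserSet_image hF

lemma mu_apply (h : IsAuto Γ φ) (v : V) : mu Γ (φ v) = mu Γ v := by
  have hset : ∀ {ψ : V ≃ V}, IsAuto Γ ψ → ∀ w,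
      {n | ∃ F, MoserSet Γ w F ∧ (bd Γ F).ncard = n} ⊆
        {n | ∃ F, MoserSet Γ (ψ w) F ∧ (bd Γ F).ncard = n} := by
    rintro ψ hψ w n ⟨F, hF, rfl⟩
    exact ⟨ψ '' F, hψ.moserSet_image hF, hψ.ncard_bd_image F⟩
  have hback := hset h.symm (φ v)
  rw [φ.symm_apply_apply] at hback
  exact congrArg sInf (Subset.antisymm hback (hset h v))

lemma molecule_image (h : IsAuto Γ φ) {v : V} {F : Set V} (hF : Molecule Γ v F) :
    Molecule Γ (φ v) (φ '' F) :=
  ⟨h.moserSet_image hF.1, by rw [h.ncard_bd_image, hF.2, h.mu_apply]⟩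

lemma molecule_symm_image (h : IsAuto Γ φ) {v : V} {F : Set V} (hF : Molecule Γ (φ v) F) :
    Molecule Γ v (φ.symm '' F) := by
  simpa only [φ.symm_apply_apply] using h.symm.molecule_image hF

lemma isKernel_image (h : IsAuto Γ φ) {v : V} {K : Set V} (hK : IsKernel Γ v K) :
    IsKernel Γ (φ v) (φ '' K) :=
  ⟨h.molecule_image hK.1, fun F hF =>
    (φ.subset_symm_image K F).1 (hK.2 _ (h.molecule_symm_image hF))⟩

end IsAuto

lemma IsKernel.unique {Γ : V → Set V} {v : V} {K K' : Set V}
    (h : IsKernel Γ v K) (h' : IsKernel Γ v K') : K = K' :=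
  Subset.antisymm (h.2 _ h'.1) (h'.2 _ h.1)

lemma isAuto_mulLeft_of_cayley {G : Type*} [Group G] {S : Set G} {Γ : G → Set G}
    (hΓ : ∀ x, Γ x = {y | x⁻¹ * y ∈ S}) (g : G) : IsAuto Γ (Equiv.mulLeft g) := by
  intro x
  ext y
  rw [mem_image_equiv, hΓ, hΓ, Equiv.mulLeft_symm]
  simp only [Equiv.coe_mulLeft, mem_ofPred_eq, mul_inv_rev, mul_assoc]

lemma kernel_eq_smul_kernel_one_of_cayley {G : Type*} [Group G] {S : Set G} {Γ : G → Set G}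
    (hΓ : ∀ x, Γ x = {y | x⁻¹ * y ∈ S}) {K : G → Set G} (hK : ∀ v, IsKernel Γ v (K v))
    (x : G) : K x = x • K 1 := by
  have hK1 : IsKernel Γ (x * 1) (x • K 1) :=
    (isAuto_mulLeft_of_cayley hΓ x).isKernel_image (hK 1)
  rw [mul_one] at hK1
  exact (hK x).unique hK1

theorem stmt15_general {G : Type*} [Group G] (B : Finset G)
    (Γ : G → Set G) (hΓ : ∀ x : G, Γ x = {y | x⁻¹ * y ∈ B})
    (K : G → Set G) (hK : ∀ v, IsKernel Γ v (K v)) :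
    ∀ x : G, Γ x ∩ K x = {y | x⁻¹ * y ∈ (B : Set G) ∩ K 1} := by
  intro x
  ext y
  rw [kernel_eq_smul_kernel_one_of_cayley hΓ hK x, hΓ]
  simp only [mem_inter_iff, mem_smul_set_iff_inv_smul_mem, smul_eq_mul, mem_ofPred_eq,
    Finset.mem_coe]

/-- The kernel graph of a Cayley graph is a Cayley graph:
Ω = Cay(G, B ∩ K₁). -/
theorem stmt15 {G : Type*} [Group G] (B : Finset G) (hB : (1 : G) ∈ B)
    (Γ : G → Set G) (hΓ : ∀ x : G, Γ x = {y | x⁻¹ * y ∈ B})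
    (K : G → Set G) (hK : ∀ v, IsKernel Γ v (K v)) :
    ∀ x : G, Γ x ∩ K x = {y | x⁻¹ * y ∈ (B : Set G) ∩ K 1} :=
  stmt15_general B Γ hΓ K hK
end

section
/- Let Γ be a vertex-transitive reflexive locally-finite relation on V, v ∈ V, and Ω the kernel graph. Then Ω⁻(v) ∩ Γ(v) = {v}. -/
open Set Pointwise

variable {V : Type*}

theorem MoserSet.eq_of_mem {Γ : V → Set V} {x v : V} {F : Set V}
    (hF : MoserSet Γ x F) (hvF : v ∈ F) (hxv : x ∈ Γ v) : v = x := by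
  have hv : v ∈ rev Γ x ∩ F := ⟨hxv, hvF⟩
  rwa [hF.2.2] at hv

theorem stmt18_general {V : Type*} (Γ : V → Set V) (hr : Refl Γ)
    (K : V → Set V) (hK : ∀ v, IsKernel Γ v (K v)) (v : V) :
    rev (fun v => Γ v ∩ K v) v ∩ Γ v = {v} := by
  ext x
  simp only [rev, mem_inter_iff, mem_ofPred_eq, mem_singleton_iff]
  constructor
  · rintro ⟨⟨-, hvK⟩, hxΓ⟩
    exact ((hK x).1.1.eq_of_mem hvK hxΓ).symm
  · rintro rfl
    exact ⟨⟨hr x, (hK x).1.1.2.1⟩, hr x⟩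

/-- Ω⁻(v) ∩ Γ(v) = {v}. -/
theorem stmt18 {V : Type*} (Γ : V → Set V) (hvt : VT Γ) (hr : Refl Γ) (hlf : LocFin Γ)
    (K : V → Set V) (hK : ∀ v, IsKernel Γ v (K v)) (v : V) :
    rev (fun v => Γ v ∩ K v) v ∩ Γ v = {v} :=
  stmt18_general Γ hr K hK v
end
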